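/- For N = 4, ζ_{U₄}(u) = ((u-1)(u³-1)) / ((u²-1)(u⁶-1)) and ζ_{U₄}(1/u) = u⁴ · ζ_{U₄}(u), so ζ_{U₄} is an absolute automorphic form of weight -4. -/

import Mathlib

/-- The `4 × 4` Grover algorithm matrix `U₄`. -/
noncomputable def groverU4 : Matrix (Fin 4) (Fin 4) ℝ :=
  (1 / 2 : ℝ) • !![1, 1, 1, 1; -1, -1, 1, 1; -1, 1, -1, 1; -1, 1, 1, -1]

/-- The matrix zeta function `ζ_{U₄}(u) = det(I₄ - u U₄)⁻¹`. -/
noncomputable def groverZeta4 (u : ℝ) : ℝ :=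
  (Matrix.det (1 - u • groverU4))⁻¹

/-!
`det(I₄ - u U₄)` is computed by cofactor expansion to be `1 + u + u³ + u⁴ = Φ₂(u)² Φ₆(u)`.
Multiplying by `Φ₁(u) Φ₃(u) = (u - 1)(u³ - 1)` turns it into `(u² - 1)(u⁶ - 1)`, which gives the
quotient formula, and since `1 + u + u³ + u⁴` is a palindromic quartic, `u⁴ · det(I₄ - u⁻¹ U₄)`
equals `det(I₄ - u U₄)`, which is the functional equation of weight `-4`.
-/

open Matrix

theorem one_sub_smul_groverU4 (u : ℝ) :
    1 - u • groverU4 = !![1 - u / 2, -u / 2, -u / 2, -u / 2; u / 2, 1 + u / 2, -u / 2, -u / 2;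
      u / 2, -u / 2, 1 + u / 2, -u / 2; u / 2, -u / 2, -u / 2, 1 + u / 2] := by
  ext i j
  fin_cases i <;> fin_cases j <;> norm_num [groverU4, one_apply] <;> ring

theorem det_one_sub_smul_groverU4 (u : ℝ) :
    det (1 - u • groverU4) = (u + 1) ^ 2 * (u ^ 2 - u + 1) := by
  rw [one_sub_smul_groverU4, det_succ_row_zero]
  simp +decide [Fin.sum_univ_succ, det_fin_three, Fin.succAbove]
  ring

theorem groverZeta4_eq_inv (u : ℝ) : groverZeta4 u = ((u + 1) ^ 2 * (u ^ 2 - u + 1))⁻¹ := by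
  rw [groverZeta4, det_one_sub_smul_groverU4]

theorem sq_sub_one_mul_pow_six_sub_one {R : Type*} [CommRing R] (u : R) :
    (u ^ 2 - 1) * (u ^ 6 - 1) = (u + 1) ^ 2 * (u ^ 2 - u + 1) * ((u - 1) * (u ^ 3 - 1)) := by
  ring

theorem inv_add_one_sq_mul_inv_sq_sub_inv_add_one {K : Type*} [Field K] {u : K} (hu : u ≠ 0) :
    (u⁻¹ + 1) ^ 2 * (u⁻¹ ^ 2 - u⁻¹ + 1) = (u ^ 4)⁻¹ * ((u + 1) ^ 2 * (u ^ 2 - u + 1)) := by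
  field_simp
  ring

/-- `ζ_{U₄}(u) = (u-1)(u³-1)/((u²-1)(u⁶-1))` and `ζ_{U₄}(1/u) = u⁴ ζ_{U₄}(u)`
(wherever defined), so `ζ_{U₄}` is an absolute automorphic form of weight `-4`. -/
theorem stmt_18 :
    (∀ u : ℝ, (u ^ 2 - 1) * (u ^ 6 - 1) ≠ 0 →
      groverZeta4 u = ((u - 1) * (u ^ 3 - 1)) / ((u ^ 2 - 1) * (u ^ 6 - 1))) ∧
    (∀ u : ℝ, u ≠ 0 → groverZeta4 u⁻¹ = u ^ 4 * groverZeta4 u) := by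
  refine ⟨fun u hu => ?_, fun u hu => ?_⟩
  · rw [sq_sub_one_mul_pow_six_sub_one] at hu ⊢
    rw [groverZeta4_eq_inv, div_mul_cancel_right₀ (right_ne_zero_of_mul hu)]
  · rw [groverZeta4_eq_inv, groverZeta4_eq_inv, inv_add_one_sq_mul_inv_sq_sub_inv_add_one hu,
      mul_inv, inv_inv]
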